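/- arXiv:1505.05630 — 2 statements merged into one kernel-verified Lean document; each statement's English description precedes it below -/
import Mathlib

section
/- There is an absolute constant c > 0 with the following property. Let G be a finite simple undirected graph on vertex set V, let 𝒞 be a family of pairwise disjoint subsets of V (clusters), and let 𝒮 be a family of paths in G; call a cluster clean if it shares no vertex with any path in 𝒮. Let d, m, k be positive integers and let ρ be a shortest u–v path in G such that: (i) every path in 𝒮 that meets ρ does so in a contiguous subpath of ρ; (ii) no contiguous subpath P of ρ simultaneously has length at most d, shares a vertex with at most m of the paths in 𝒮, and intersects exactly m clean clusters; (iii) ρ intersects exactly k clean clusters, with k ≥ m; and (iv) ρ shares a vertex with fewer than k/2 of the paths in 𝒮. Then δ_G(u,v) ≥ c·k·d/m. -/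
/-!
Cut `ρ` greedily from the left into windows meeting exactly `m` clean clusters, each window
ending just before a vertex of a fresh clean cluster. That vertex lies on no strip, and strips
meet `ρ` contiguously, so no strip meets two windows. By maximality (ii) a window of length at
most `d` meets more than `m` strips; since `ρ` meets fewer than `k/2` strips, the short windows
cover fewer than `k/2` clusters, so more than `k/(4m)` windows are long, each using more than
`d` vertices of `ρ`.
-/

theorem List.Nodup.mem_of_infix_of_mem_of_mem {α : Type*} {I p q : List α} {c x y : α}
    (hnd : (p ++ c :: q).Nodup) (hI : I <:+: p ++ c :: q)
    (hxI : x ∈ I) (hxp : x ∈ p) (hyI : y ∈ I) (hyq : y ∈ c :: q) : c ∈ I := by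
  have hdisj := List.disjoint_of_nodup_append hnd
  obtain ⟨s, t, h⟩ := hI
  rw [List.append_assoc, List.append_eq_append_iff] at h
  rcases h with ⟨a, rfl, h⟩ | ⟨b, rfl, h⟩
  · rw [List.append_eq_append_iff] at h
    rcases h with ⟨a', rfl, rfl⟩ | ⟨_ | ⟨c', c''⟩, rfl, h⟩
    · exact (hdisj (by simp [hyI]) hyq).elim
    · exact (hdisj (by simp_all) hyq).elim
    · simp_all
  · exact (hdisj hxp (h ▸ by simp [hxI])).elim

lemma mul_le_four_mul_of_window_counts {k m d n g b s : ℕ} (hmk : m ≤ k) (hs : 2 * s < k)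
    (hk : k + 1 ≤ m * (g + b + 1)) (hg : (d + 1) * g ≤ n + 1) (hb : (m + 1) * b ≤ s) :
    k * d ≤ 4 * m * n := by
  have hg1 : 1 ≤ g := by
    by_contra! hg0
    obtain rfl : g = 0 := by omega
    rcases Nat.eq_zero_or_pos b with rfl | hb1
    · omega
    · nlinarith
  have hk' : k ≤ 4 * m * g := by nlinarith
  have hgd : g * d ≤ n := by nlinarith
  calc k * d ≤ 4 * m * g * d := Nat.mul_le_mul_right d hk'
    _ = 4 * m * (g * d) := by ring
    _ ≤ 4 * m * n := Nat.mul_le_mul_left _ hgd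

section Strips

variable {V ι : Type*} (𝒞 : Set (Set V)) (𝒮 : Set ι) (σ : ι → Set V)

def IsClean (C : Set V) : Prop := ∀ S ∈ 𝒮, ∀ x ∈ C, x ∉ σ S

def cleanClustersMeeting (l : List V) : Set (Set V) :=
  {C ∈ 𝒞 | IsClean 𝒮 σ C ∧ ∃ x ∈ C, x ∈ l}

def stripsMeeting (l : List V) : Set ι := {S ∈ 𝒮 | ∃ x, x ∈ σ S ∧ x ∈ l}

variable {𝒞 𝒮 σ}

@[simp]
lemma cleanClustersMeeting_nil : cleanClustersMeeting 𝒞 𝒮 σ [] = ∅ := by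
  simp [cleanClustersMeeting]

lemma cleanClustersMeeting_append (l₁ l₂ : List V) :
    cleanClustersMeeting 𝒞 𝒮 σ (l₁ ++ l₂) =
      cleanClustersMeeting 𝒞 𝒮 σ l₁ ∪ cleanClustersMeeting 𝒞 𝒮 σ l₂ := by
  ext C
  simp only [cleanClustersMeeting, List.mem_append, Set.mem_union, Set.mem_ofPred_eq]
  grind

lemma stripsMeeting_append (l₁ l₂ : List V) :
    stripsMeeting 𝒮 σ (l₁ ++ l₂) = stripsMeeting 𝒮 σ l₁ ∪ stripsMeeting 𝒮 σ l₂ := by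
  ext S
  simp only [stripsMeeting, List.mem_append, Set.mem_union, Set.mem_ofPred_eq]
  grind

lemma ncard_cleanClustersMeeting_append_le (l₁ l₂ : List V) :
    (cleanClustersMeeting 𝒞 𝒮 σ (l₁ ++ l₂)).ncard ≤
      (cleanClustersMeeting 𝒞 𝒮 σ l₁).ncard + (cleanClustersMeeting 𝒞 𝒮 σ l₂).ncard :=
  cleanClustersMeeting_append l₁ l₂ ▸ Set.ncard_union_le _ _

lemma ncard_cleanClustersMeeting_singleton_le_one (h𝒞 : 𝒞.PairwiseDisjoint id) (x : V) :
    (cleanClustersMeeting 𝒞 𝒮 σ [x]).ncard ≤ 1 := by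
  have hsub : (cleanClustersMeeting 𝒞 𝒮 σ [x]).Subsingleton := by
    rintro C ⟨hC, -, y, hyC, hy⟩ D ⟨hD, -, z, hzD, hz⟩
    rw [List.mem_singleton] at hy hz
    exact h𝒞.elim_set hC hD x (hy ▸ hyC) (hz ▸ hzD)
  exact (Set.ncard_le_one_iff hsub.finite).2 fun hC hD => hsub hC hD

lemma exists_append_ncard_cleanClustersMeeting_eq (h𝒞 : 𝒞.PairwiseDisjoint id) {m : ℕ}
    {l : List V} (hm : m ≤ (cleanClustersMeeting 𝒞 𝒮 σ l).ncard) :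
    ∃ w r, l = w ++ r ∧ (cleanClustersMeeting 𝒞 𝒮 σ w).ncard = m ∧
      ∀ c q, r = c :: q → (cleanClustersMeeting 𝒞 𝒮 σ [c]).Nonempty := by
  induction l using List.reverseRecOn with
  | nil => exact ⟨[], [], rfl, by simp_all, by simp⟩
  | append_singleton l x ih =>
    by_cases hl : m ≤ (cleanClustersMeeting 𝒞 𝒮 σ l).ncard
    · obtain ⟨w, r, rfl, hw, hr⟩ := ih hl
      rcases r with _ | ⟨c, q⟩
      · by_cases hx : (cleanClustersMeeting 𝒞 𝒮 σ [x]).Nonempty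
        · exact ⟨w, [x], by simp, hw, by rintro _ _ ⟨⟩; exact hx⟩
        · refine ⟨w ++ [x], [], by simp, ?_, by simp⟩
          rw [cleanClustersMeeting_append, Set.not_nonempty_iff_eq_empty.1 hx,
            Set.union_empty, hw]
      · exact ⟨w, c :: q ++ [x], by simp, hw, by rintro _ _ ⟨⟩; exact hr c q rfl⟩
    · have happend := ncard_cleanClustersMeeting_append_le (𝒞 := 𝒞) (𝒮 := 𝒮) (σ := σ) l [x]
      have hx := ncard_cleanClustersMeeting_singleton_le_one (𝒮 := 𝒮) (σ := σ) h𝒞 x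
      exact ⟨l ++ [x], [], by simp, by omega, by simp⟩

variable {M : List V} (hM : M.Nodup)
  (hcontig : ∀ S ∈ 𝒮, (∃ x, x ∈ σ S ∧ x ∈ M) →
    ∃ I, I <:+: M ∧ ∀ x, x ∈ σ S ∧ x ∈ M ↔ x ∈ I)
include hM hcontig

lemma disjoint_stripsMeeting_of_infix {p q : List V} {c : V} (h : p ++ c :: q <:+: M)
    (hc : (cleanClustersMeeting 𝒞 𝒮 σ [c]).Nonempty) :
    Disjoint (stripsMeeting 𝒮 σ p) (stripsMeeting 𝒮 σ (c :: q)) := by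
  obtain ⟨C, -, hclean, z, hzC, hz⟩ := hc
  rw [List.mem_singleton] at hz
  subst hz
  rw [Set.disjoint_left]
  rintro S ⟨hS, x, hxS, hxp⟩ ⟨-, y, hyS, hyq⟩
  obtain ⟨s, t, rfl⟩ := h
  obtain ⟨I, hI, hIS⟩ := hcontig S hS ⟨x, hxS, by simp [hxp]⟩
  have hsplit : s ++ (p ++ z :: q) ++ t = (s ++ p) ++ z :: (q ++ t) := by simp
  rw [hsplit] at hM hI hIS
  have hzI := List.Nodup.mem_of_infix_of_mem_of_mem hM hI ((hIS x).1 ⟨hxS, by simp [hxp]⟩)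
    (by simp [hxp]) ((hIS y).1 ⟨hyS, by simp at hyq ⊢; tauto⟩) (by simp at hyq ⊢; tauto)
  exact hclean S hS z hzC ((hIS z).2 hzI).1

variable (h𝒞 : 𝒞.PairwiseDisjoint id) (h𝒮 : 𝒮.Finite) {d m : ℕ} (hm : 0 < m)
  (hii : ¬ ∃ w : List V, w ≠ [] ∧ w <:+: M ∧ w.length - 1 ≤ d ∧
    (stripsMeeting 𝒮 σ w).ncard ≤ m ∧ (cleanClustersMeeting 𝒞 𝒮 σ w).ncard = m)
include h𝒞 h𝒮 hm hii

/-- Greedy window decomposition of `l`: every window meets `m` clean clusters, the `g` long ones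
have more than `d` vertices, and each of the `b` short ones meets more than `m` strips, none of
which meets another window. -/
theorem exists_long_short_window_counts {l : List V} (hl : l <:+: M) :
    ∃ g b : ℕ, (cleanClustersMeeting 𝒞 𝒮 σ l).ncard + 1 ≤ m * (g + b + 1) ∧
      (d + 1) * g ≤ l.length ∧ (m + 1) * b ≤ (stripsMeeting 𝒮 σ l).ncard := by
  induction hn : l.length using Nat.strong_induction_on generalizing l with
  | _ n ih =>
  by_cases hlm : (cleanClustersMeeting 𝒞 𝒮 σ l).ncard < m
  · exact ⟨0, 0, by simpa using hlm, by simp, by simp⟩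
  obtain ⟨w, r, rfl, hw, hr⟩ := exists_append_ncard_cleanClustersMeeting_eq h𝒞 (not_lt.1 hlm)
  have hw0 : w ≠ [] := by rintro rfl; simp at hw; omega
  obtain ⟨g, b, hk, hg, hb⟩ := ih r.length (by simp [← hn, List.length_pos_iff.2 hw0])
    ((List.suffix_append w r).isInfix.trans hl) rfl
  have hcl := ncard_cleanClustersMeeting_append_le (𝒞 := 𝒞) (𝒮 := 𝒮) (σ := σ) w r
  have hst : (stripsMeeting 𝒮 σ (w ++ r)).ncard =
      (stripsMeeting 𝒮 σ w).ncard + (stripsMeeting 𝒮 σ r).ncard := by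
    rw [stripsMeeting_append]
    refine Set.ncard_union_eq ?_ (h𝒮.subset fun _ h => h.1) (h𝒮.subset fun _ h => h.1)
    rcases r with _ | ⟨c, q⟩
    · simp [stripsMeeting]
    · exact disjoint_stripsMeeting_of_infix hM hcontig hl (hr c q rfl)
  by_cases hshort : w.length - 1 ≤ d
  · have hwst : m < (stripsMeeting 𝒮 σ w).ncard := by
      by_contra! h
      exact hii ⟨w, hw0, (List.prefix_append w r).isInfix.trans hl, hshort, h, hw⟩
    refine ⟨g, b + 1, by nlinarith, by rw [← hn, List.length_append]; omega, by nlinarith⟩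
  · have hlong : d + 1 ≤ w.length := by omega
    refine ⟨g + 1, b, by nlinarith, by rw [← hn, List.length_append]; nlinarith, by omega⟩

theorem mul_le_length_of_ncard_cleanClustersMeeting_eq {k : ℕ}
    (hk : (cleanClustersMeeting 𝒞 𝒮 σ M).ncard = k) (hmk : m ≤ k)
    (hst : 2 * (stripsMeeting 𝒮 σ M).ncard < k) :
    k * d ≤ 4 * m * (M.length - 1) := by
  obtain ⟨g, b, hgb, hg, hb⟩ :=
    exists_long_short_window_counts hM hcontig h𝒞 h𝒮 hm hii (List.infix_refl M)
  exact mul_le_four_mul_of_window_counts hmk hst (hk ▸ hgb) (hg.trans (by omega)) hb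

end Strips

/-- Strip-length lemma: there is an absolute constant `c₀ > 0` such that any shortest
path that could not have a further strip extracted from it (condition (ii)), meets
exactly `k ≥ m` clean clusters and fewer than `k/2` strips, must have length at least
`c₀·k·d/m`. -/
theorem strip_length_bound :
    ∃ c₀ : ℝ, 0 < c₀ ∧
      ∀ (V : Type) [Fintype V], ∀ (G : SimpleGraph V) (𝒞 : Set (Set V))
        (𝒮 : Set ((a : V) × (b : V) × G.Walk a b)) (d m k : ℕ),
        𝒞.PairwiseDisjoint id →
        𝒮.Finite →
        0 < d → 0 < m → 0 < k →
        ∀ (u v : V) (ρ : G.Walk u v), ρ.length = G.dist u v →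
        -- (i) every strip meeting `ρ` does so in a contiguous subpath of `ρ`
        (∀ S ∈ 𝒮, (∃ x : V, x ∈ S.2.2.support ∧ x ∈ ρ.support) →
          ∃ l : List V, l ≠ [] ∧ l <:+: ρ.support ∧
            ∀ x : V, (x ∈ S.2.2.support ∧ x ∈ ρ.support) ↔ x ∈ l) →
        -- (ii) no contiguous subpath of `ρ` of length at most `d` meets at most `m`
        -- strips while intersecting exactly `m` clean clusters
        (¬ ∃ l : List V, l ≠ [] ∧ l <:+: ρ.support ∧ l.length - 1 ≤ d ∧
          {S ∈ 𝒮 | ∃ x : V, x ∈ S.2.2.support ∧ x ∈ l}.ncard ≤ m ∧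
          {C ∈ 𝒞 | (∀ S ∈ 𝒮, ∀ x ∈ C, x ∉ S.2.2.support) ∧
            ∃ x ∈ C, x ∈ l}.ncard = m) →
        -- (iii) `ρ` intersects exactly `k ≥ m` clean clusters
        {C ∈ 𝒞 | (∀ S ∈ 𝒮, ∀ x ∈ C, x ∉ S.2.2.support) ∧
          ∃ x ∈ C, x ∈ ρ.support}.ncard = k →
        m ≤ k →
        -- (iv) `ρ` meets fewer than `k/2` strips
        2 * {S ∈ 𝒮 | ∃ x : V, x ∈ S.2.2.support ∧ x ∈ ρ.support}.ncard < k →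
        c₀ * k * d / m ≤ (G.dist u v : ℝ) := by
  refine ⟨1 / 4, by norm_num, ?_⟩
  intro V _ G 𝒞 𝒮 d m k h𝒞 h𝒮 _ hm _ u v ρ hρ hcontig hii hk hmk hst
  have key := mul_le_length_of_ncard_cleanClustersMeeting_eq
    (σ := fun S : (a : V) × (b : V) × G.Walk a b => {x | x ∈ S.2.2.support})
    (ρ.isPath_of_length_eq_dist hρ).support_nodup
    (fun S hS h => (hcontig S hS h).imp fun _ => And.right) h𝒞 h𝒮 hm hii hk hmk hst
  rw [ρ.length_support, Nat.add_sub_cancel, hρ] at key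
  rw [div_le_iff₀ (by positivity)]
  have : (k * d : ℝ) ≤ 4 * m * G.dist u v := by exact_mod_cast key
  linarith
end

section
/- Let V be a finite set with |V| = n, let m ≥ 1, and let ℛ be a finite nonempty family of subsets of V each of size at least m. Then there exists a set H ⊆ V with |H| ≤ (n/m)·(ln |ℛ| + 1) such that every member R ∈ ℛ satisfies H ∩ R ≠ ∅. -/
open Finset in
lemma hitting_set_aux {V : Type*} [Fintype V] (m : ℕ) (hm : 1 ≤ m) :
    ∀ r : ℕ, ∀ ℱ : Finset (Set V), ℱ.card = r → (∀ R ∈ ℱ, m ≤ R.ncard) →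
    ∃ H : Finset V, (H.card : ℝ) ≤ ((Fintype.card V : ℝ) / m) * (Real.log r + 1) ∧
      ∀ R ∈ ℱ, ∃ v ∈ H, v ∈ R := by
  intro r
  induction r using Nat.strong_induction_on with
  | _ r ih =>
  intro ℱ hcard hsize
  classical
  rcases Nat.eq_zero_or_pos r with hr0 | hrpos
  · subst hr0
    refine ⟨∅, ?_, ?_⟩
    · simp [Real.log_zero]
      positivity
    · intro R hR
      simp [Finset.card_eq_zero.mp hcard] at hR
  -- r ≥ 1 : pick a witness set to get m ≤ n
  obtain ⟨R₀, hR₀⟩ := Finset.card_pos.mp (hcard ▸ hrpos)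
  set n := Fintype.card V with hn
  have hmn : m ≤ n := by
    refine le_trans (hsize R₀ hR₀) ?_
    have := Set.ncard_le_ncard (Set.subset_univ R₀) (Set.toFinite _)
    simpa [Set.ncard_univ, Nat.card_eq_fintype_card] using this
  have hn1 : 1 ≤ n := le_trans hm hmn
  have : Nonempty V := Fintype.card_pos_iff.mp hn1
  -- counting
  set cnt : V → ℕ := fun v => (ℱ.filter (fun R => v ∈ R)).card with hcnt
  have hsum : m * r ≤ ∑ v, cnt v := by
    have h1 : ∑ v, cnt v = ∑ R ∈ ℱ, R.ncard := by
      simp only [hcnt, Finset.card_filter]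
      rw [Finset.sum_comm]
      refine Finset.sum_congr rfl fun R _ => ?_
      rw [Finset.sum_boole]
      rw [Set.ncard_eq_toFinset_card']
      norm_cast
      congr 1
      ext w
      simp
    rw [h1]
    calc m * r = ∑ _R ∈ ℱ, m := by rw [Finset.sum_const, hcard]; ring
    _ ≤ ∑ R ∈ ℱ, R.ncard := Finset.sum_le_sum hsize
  have hv : ∃ v : V, m * r ≤ n * cnt v := by
    by_contra h
    push_neg at h
    have h2 : ∑ v, n * cnt v < ∑ _v : V, m * r :=
      Finset.sum_lt_sum_of_nonempty Finset.univ_nonempty (fun v _ => h v)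
    rw [← Finset.mul_sum, Finset.sum_const, Finset.card_univ, ← hn, smul_eq_mul] at h2
    have := Nat.mul_le_mul_left n hsum
    omega
  obtain ⟨v, hv⟩ := hv
  have hcntpos : 1 ≤ cnt v := by
    rcases Nat.eq_zero_or_pos (cnt v) with h | h
    · rw [h] at hv; simp at hv; omega
    · exact h
  set ℱ' := ℱ.filter (fun R => v ∉ R) with hℱ'
  have hsplit : cnt v + ℱ'.card = r := by
    rw [hcnt, hℱ', ← hcard]
    exact Finset.card_filter_add_card_filter_not (fun R => v ∈ R)
  by_cases hr' : ℱ'.card = 0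
  · -- single element v hits everything
    refine ⟨{v}, ?_, ?_⟩
    · have hlogr : (0:ℝ) ≤ Real.log r := Real.log_nonneg (by exact_mod_cast hrpos)
      have h1 : (1:ℝ) ≤ (n:ℝ)/m := by
        rw [le_div_iff₀ (by positivity)]
        simpa using (Nat.cast_le.mpr hmn : (m:ℝ) ≤ n)
      simp only [Finset.card_singleton, Nat.cast_one]
      nlinarith
    · intro R hR
      refine ⟨v, Finset.mem_singleton_self v, ?_⟩
      by_contra hvR
      have : R ∈ ℱ' := Finset.mem_filter.mpr ⟨hR, hvR⟩
      rw [Finset.card_eq_zero.mp hr'] at this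
      simp at this
  · -- recurse
    have hlt : ℱ'.card < r := by omega
    obtain ⟨H', hH'bound, hH'hit⟩ := ih ℱ'.card hlt ℱ' rfl
      (fun R hR => hsize R (Finset.mem_filter.mp hR).1)
    refine ⟨insert v H', ?_, ?_⟩
    · have hcardins : ((insert v H').card : ℝ) ≤ (H'.card : ℝ) + 1 := by
        exact_mod_cast Finset.card_insert_le v H'
      have hr'pos : 0 < ℱ'.card := Nat.pos_of_ne_zero hr'
      have hrR : (0:ℝ) < r := by exact_mod_cast hrpos
      have hr'R : (0:ℝ) < (ℱ'.card : ℝ) := by exact_mod_cast hr'pos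
      have hnR : (0:ℝ) < n := by exact_mod_cast hn1
      have hmR : (0:ℝ) < m := by exact_mod_cast hm
      have hcast : (cnt v : ℝ) + (ℱ'.card : ℝ) = r := by exact_mod_cast hsplit
      have hvR : (m:ℝ) * r ≤ (n:ℝ) * cnt v := by exact_mod_cast hv
      have hmn' : (n:ℝ) * ((m:ℝ)/n) = m := by field_simp
      have hfrac : (ℱ'.card : ℝ) / r ≤ 1 - (m:ℝ)/n := by
        rw [div_le_iff₀ hrR]
        nlinarith
      have hlog : Real.log (ℱ'.card : ℝ) - Real.log r ≤ -((m:ℝ)/n) := by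
        have h1 := Real.log_le_sub_one_of_pos (div_pos hr'R hrR)
        rw [Real.log_div (ne_of_gt hr'R) (ne_of_gt hrR)] at h1
        linarith
      have hdiv : (0:ℝ) ≤ (n:ℝ)/m := by positivity
      have hone : (n:ℝ)/m * ((m:ℝ)/n) = 1 := by field_simp
      have hmul := mul_le_mul_of_nonneg_left hlog hdiv
      nlinarith [hH'bound, hcardins]
    · intro R hR
      by_cases hvR : v ∈ R
      · exact ⟨v, Finset.mem_insert_self v H', hvR⟩
      · obtain ⟨w, hw, hwR⟩ := hH'hit R (Finset.mem_filter.mpr ⟨hR, hvR⟩)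
        exact ⟨w, Finset.mem_insert_of_mem hw, hwR⟩

/-- Greedy hitting-set bound: if `ℛ` is a nonempty family of subsets of an `n`-element
set `V`, each of size at least `m`, then `ℛ` has a hitting set of size at most
`(n/m)·(ln |ℛ| + 1)`. -/
theorem hitting_set_exists {V : Type*} [Fintype V] (n : ℕ) (hn : Fintype.card V = n)
    (m : ℕ) (hm : 1 ≤ m) (ℛ : Set (Set V)) (hne : ℛ.Nonempty)
    (hsize : ∀ R ∈ ℛ, m ≤ R.ncard) :
    ∃ H : Set V, (H.ncard : ℝ) ≤ ((n : ℝ) / (m : ℝ)) * (Real.log ℛ.ncard + 1) ∧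
      ∀ R ∈ ℛ, (H ∩ R).Nonempty := by
  classical
  have hfin : ℛ.Finite := Set.toFinite ℛ
  obtain ⟨H, hHb, hHhit⟩ := hitting_set_aux m hm hfin.toFinset.card hfin.toFinset rfl
    (fun R hR => hsize R (hfin.mem_toFinset.mp hR))
  refine ⟨(H : Set V), ?_, ?_⟩
  · rw [Set.ncard_coe_finset, ← hn]
    rwa [Set.ncard_eq_toFinset_card ℛ hfin]
  · intro R hR
    obtain ⟨w, hw, hwR⟩ := hHhit R (hfin.mem_toFinset.mpr hR)
    exact ⟨w, by simpa using hw, hwR⟩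
end
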